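/- Let Σ ∈ ℝ^{p×p} be symmetric positive semidefinite, b ∈ ℝ^p, θ ∈ ℝ^n, and X ∈ ℝ^{n×p} any matrix. If ‖Σ^{1/2}b‖₂² + ‖θ‖₂² = 1, then ‖Xb − θ‖₂² ≥ (1/2) · min{ inf{ ‖Xb'‖₂² : ‖Σ^{1/2}b'‖₂ = 1, ‖b'‖₁ ≤ √2 r₁ }, 1 } − 2 |sup{ b''^T X^T θ'' : ‖Σ^{1/2}b''‖₂² + ‖θ''‖₂² = 1, ‖b''‖₁ ≤ r₁, ‖θ''‖₁ ≤ r₂ }|, provided also ‖b‖₁ ≤ r₁ and ‖θ‖₁ ≤ r₂. -/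

import Mathlib

open Finset

/-- The positive semidefinite square root, with its definition from the older Mathlib
(`Matrix.PosSemidef.sqrt`, since removed). -/
noncomputable def Matrix.PosSemidef.sqrt {n 𝕜 : Type*} [Fintype n] [RCLike 𝕜] [PartialOrder 𝕜] [DecidableEq n]
    {A : Matrix n n 𝕜} (hA : A.PosSemidef) : Matrix n n 𝕜 :=
  hA.1.eigenvectorUnitary.1 * Matrix.diagonal ((↑) ∘ Real.sqrt ∘ hA.1.eigenvalues) *
    (star hA.1.eigenvectorUnitary : Matrix n n 𝕜)

/-!
Write `A = ‖Rb‖²` and `T = ‖θ‖²` (with `R = Σ^{1/2}`), so `A + T = 1`. Expanding,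
`‖Xb - θ‖² = ‖Xb‖² + T - 2 θᵀXb`, and the cross term is at most the supremum since `(b, θ)` is
admissible for it. It remains to see `‖Xb‖² + T ≥ min(λ, 1) / 2`, where `λ` is the restricted
infimum: either `T ≥ 1/2`, or `A ≥ 1/2`, and then `b / √A` is admissible for `λ` (its `ℓ¹`-norm is at
most `√2 r₁`), whence `‖Xb‖² ≥ A λ ≥ λ / 2`.
-/

namespace SplittingArgument

open scoped Matrix

variable {ι κ : Type*} [Fintype ι] [Fintype κ]

noncomputable def restrictedEigenvalue (R : Matrix κ κ ℝ) (X : Matrix ι κ ℝ) (r : ℝ) : ℝ :=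
  sInf {x : ℝ | ∃ b' : κ → ℝ,
    (∑ i, (R.mulVec b' i) ^ 2) = 1 ∧ (∑ i, |b' i|) ≤ r ∧ x = ∑ i, (X.mulVec b' i) ^ 2}

noncomputable def crossTermSup (R : Matrix κ κ ℝ) (X : Matrix ι κ ℝ) (r₁ r₂ : ℝ) : ℝ :=
  sSup {x : ℝ | ∃ (b'' : κ → ℝ) (θ'' : ι → ℝ),
    (∑ i, (R.mulVec b'' i) ^ 2 + ∑ i, (θ'' i) ^ 2 = 1) ∧
    (∑ i, |b'' i|) ≤ r₁ ∧ (∑ i, |θ'' i|) ≤ r₂ ∧ x = ∑ i, θ'' i * X.mulVec b'' i}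

theorem sum_sub_sq_eq (u v : ι → ℝ) :
    ∑ i, (u i - v i) ^ 2 = ∑ i, u i ^ 2 + ∑ i, v i ^ 2 - 2 * ∑ i, v i * u i := by
  rw [mul_sum, ← sum_add_distrib, ← sum_sub_distrib]
  exact sum_congr rfl fun i _ => by ring

theorem sum_sq_mulVec_smul (M : Matrix ι κ ℝ) (c : ℝ) (v : κ → ℝ) :
    ∑ i, (M *ᵥ (c • v)) i ^ 2 = c ^ 2 * ∑ i, (M *ᵥ v) i ^ 2 := by
  simp only [Matrix.mulVec_smul, Pi.smul_apply, smul_eq_mul, mul_pow, mul_sum]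

theorem abs_le_of_sum_abs_le {v : ι → ℝ} {r : ℝ} (hv : ∑ i, |v i| ≤ r) (i : ι) : |v i| ≤ r :=
  (single_le_sum (fun j _ => abs_nonneg (v j)) (mem_univ i)).trans hv

theorem sum_mul_mulVec_le (X : Matrix ι κ ℝ) {b : κ → ℝ} {θ : ι → ℝ} {r₁ r₂ : ℝ}
    (hb : ∑ j, |b j| ≤ r₁) (hθ : ∑ i, |θ i| ≤ r₂) :
    ∑ i, θ i * (X *ᵥ b) i ≤ r₂ * r₁ * ∑ i, ∑ j, |X i j| := by
  simp only [Matrix.mulVec, dotProduct, mul_sum]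
  refine sum_le_sum fun i _ => sum_le_sum fun j _ => ?_
  have hθi := abs_le_of_sum_abs_le hθ i
  calc θ i * (X i j * b j) ≤ |θ i| * (|X i j| * |b j|) := by
        rw [← abs_mul, ← abs_mul]; exact le_abs_self _
    _ ≤ r₂ * (|X i j| * r₁) :=
        mul_le_mul hθi (by gcongr; exact abs_le_of_sum_abs_le hb j) (by positivity)
          ((abs_nonneg _).trans hθi)
    _ = r₂ * r₁ * |X i j| := by ring

theorem sum_mul_mulVec_le_crossTermSup {R : Matrix κ κ ℝ} {X : Matrix ι κ ℝ}
    {b : κ → ℝ} {θ : ι → ℝ} {r₁ r₂ : ℝ}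
    (hnorm : ∑ i, (R *ᵥ b) i ^ 2 + ∑ i, θ i ^ 2 = 1) (hb : ∑ j, |b j| ≤ r₁)
    (hθ : ∑ i, |θ i| ≤ r₂) :
    ∑ i, θ i * (X *ᵥ b) i ≤ crossTermSup R X r₁ r₂ :=
  le_csSup ⟨r₂ * r₁ * ∑ i, ∑ j, |X i j|, by
      rintro _ ⟨b'', θ'', -, hb'', hθ'', rfl⟩
      exact sum_mul_mulVec_le X hb'' hθ''⟩
    ⟨b, θ, hnorm, hb, hθ, rfl⟩

theorem restrictedEigenvalue_nonneg (R : Matrix κ κ ℝ) (X : Matrix ι κ ℝ) (r : ℝ) :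
    0 ≤ restrictedEigenvalue R X r :=
  Real.sInf_nonneg (by rintro _ ⟨_, _, _, rfl⟩; positivity)

theorem mul_restrictedEigenvalue_le {R : Matrix κ κ ℝ} (X : Matrix ι κ ℝ) {b : κ → ℝ} {r : ℝ}
    (hA : 0 < ∑ i, (R *ᵥ b) i ^ 2) (hb : ∑ j, |b j| ≤ √(∑ i, (R *ᵥ b) i ^ 2) * r) :
    (∑ i, (R *ᵥ b) i ^ 2) * restrictedEigenvalue R X r ≤ ∑ i, (X *ᵥ b) i ^ 2 := by
  set A := ∑ i, (R *ᵥ b) i ^ 2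
  have hs : 0 < √A := Real.sqrt_pos.mpr hA
  have hsA : √A ^ 2 = A := Real.sq_sqrt hA.le
  have hle : restrictedEigenvalue R X r ≤ ∑ i, (X *ᵥ ((√A)⁻¹ • b)) i ^ 2 := by
    refine csInf_le ⟨0, by rintro _ ⟨_, _, _, rfl⟩; positivity⟩ ⟨(√A)⁻¹ • b, ?_, ?_, rfl⟩
    · rw [sum_sq_mulVec_smul, inv_pow, hsA, inv_mul_cancel₀ hA.ne']
    · simp only [Pi.smul_apply, smul_eq_mul, abs_mul, abs_inv, abs_of_pos hs, ← mul_sum]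
      rwa [inv_mul_le_iff₀ hs]
  rw [sum_sq_mulVec_smul, inv_pow, hsA] at hle
  calc A * restrictedEigenvalue R X r ≤ A * (A⁻¹ * ∑ i, (X *ᵥ b) i ^ 2) := by
        gcongr
    _ = ∑ i, (X *ᵥ b) i ^ 2 := by field_simp

theorem half_min_restrictedEigenvalue_le {R : Matrix κ κ ℝ} (X : Matrix ι κ ℝ)
    {b : κ → ℝ} {θ : ι → ℝ} {r : ℝ}
    (hnorm : ∑ i, (R *ᵥ b) i ^ 2 + ∑ i, θ i ^ 2 = 1) (hb : ∑ j, |b j| ≤ r) :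
    1 / 2 * min (restrictedEigenvalue R X (√2 * r)) 1 ≤ ∑ i, (X *ᵥ b) i ^ 2 + ∑ i, θ i ^ 2 := by
  set ev := restrictedEigenvalue R X (√2 * r)
  rcases le_or_gt (∑ i, θ i ^ 2) (1 / 2) with hθ | hθ
  · set A := ∑ i, (R *ᵥ b) i ^ 2
    have hA : 1 / 2 ≤ A := by linarith
    have hr : 0 ≤ r := (sum_nonneg fun j _ => abs_nonneg (b j)).trans hb
    have hsA : 1 ≤ √A * √2 := by
      rw [← Real.sqrt_mul (by linarith)]
      exact Real.one_le_sqrt.mpr (by linarith)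
    have hb' : ∑ j, |b j| ≤ √A * (√2 * r) :=
      mul_assoc (√A) (√2) r ▸ hb.trans (le_mul_of_one_le_left hr hsA)
    calc 1 / 2 * min ev 1 ≤ A * ev :=
          mul_le_mul hA (min_le_left _ _)
            (le_min (restrictedEigenvalue_nonneg R X _) zero_le_one) (by linarith)
      _ ≤ ∑ i, (X *ᵥ b) i ^ 2 := mul_restrictedEigenvalue_le X (by linarith) hb'
      _ ≤ ∑ i, (X *ᵥ b) i ^ 2 + ∑ i, θ i ^ 2 := le_add_of_nonneg_right (by positivity)
  · have : 0 ≤ ∑ i, (X *ᵥ b) i ^ 2 := by positivity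
    have := min_le_right ev 1
    linarith

end SplittingArgument

open SplittingArgument in
theorem splitting_argument_general {n p : ℕ} (S : Matrix (Fin p) (Fin p) ℝ)
    (hS : S.PosSemidef) (X : Matrix (Fin n) (Fin p) ℝ)
    (b : Fin p → ℝ) (θ : Fin n → ℝ) (r₁ r₂ : ℝ)
    (hnorm : ∑ i, (hS.sqrt.mulVec b i) ^ 2 + ∑ i, (θ i) ^ 2 = 1)
    (hb1 : ∑ i, |b i| ≤ r₁) (hθ1 : ∑ i, |θ i| ≤ r₂) :
    ∑ i, (X.mulVec b i - θ i) ^ 2 ≥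
      (1 / 2) * min (sInf {x : ℝ | ∃ b' : Fin p → ℝ,
          (∑ i, (hS.sqrt.mulVec b' i) ^ 2) = 1 ∧ (∑ i, |b' i|) ≤ Real.sqrt 2 * r₁ ∧
          x = ∑ i, (X.mulVec b' i) ^ 2}) 1
      - 2 * |sSup {x : ℝ | ∃ (b'' : Fin p → ℝ) (θ'' : Fin n → ℝ),
          (∑ i, (hS.sqrt.mulVec b'' i) ^ 2 + ∑ i, (θ'' i) ^ 2 = 1) ∧
          (∑ i, |b'' i|) ≤ r₁ ∧ (∑ i, |θ'' i|) ≤ r₂ ∧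
          x = ∑ i, θ'' i * X.mulVec b'' i}| := by
  change _ ≥ 1 / 2 * min (restrictedEigenvalue hS.sqrt X (√2 * r₁)) 1
    - 2 * |crossTermSup hS.sqrt X r₁ r₂|
  have hcross := (sum_mul_mulVec_le_crossTermSup (X := X) hnorm hb1 hθ1).trans (le_abs_self _)
  have hsplit := half_min_restrictedEigenvalue_le X hnorm hb1
  rw [sum_sub_sq_eq]
  linarith

/-- The deterministic splitting argument inequality. -/
theorem splitting_argument {n p : ℕ} (S : Matrix (Fin p) (Fin p) ℝ)
    (hS : S.PosSemidef) (X : Matrix (Fin n) (Fin p) ℝ)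
    (b : Fin p → ℝ) (θ : Fin n → ℝ) (r₁ r₂ : ℝ) (hr₁ : 0 < r₁) (hr₂ : 0 < r₂)
    (hnorm : ∑ i, (hS.sqrt.mulVec b i) ^ 2 + ∑ i, (θ i) ^ 2 = 1)
    (hb1 : ∑ i, |b i| ≤ r₁) (hθ1 : ∑ i, |θ i| ≤ r₂) :
    ∑ i, (X.mulVec b i - θ i) ^ 2 ≥
      (1 / 2) * min (sInf {x : ℝ | ∃ b' : Fin p → ℝ,
          (∑ i, (hS.sqrt.mulVec b' i) ^ 2) = 1 ∧ (∑ i, |b' i|) ≤ Real.sqrt 2 * r₁ ∧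
          x = ∑ i, (X.mulVec b' i) ^ 2}) 1
      - 2 * |sSup {x : ℝ | ∃ (b'' : Fin p → ℝ) (θ'' : Fin n → ℝ),
          (∑ i, (hS.sqrt.mulVec b'' i) ^ 2 + ∑ i, (θ'' i) ^ 2 = 1) ∧
          (∑ i, |b'' i|) ≤ r₁ ∧ (∑ i, |θ'' i|) ≤ r₂ ∧
          x = ∑ i, θ'' i * X.mulVec b'' i}| :=
  splitting_argument_general S hS X b θ r₁ r₂ hnorm hb1 hθ1
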